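/- Let V ⊆ ℝⁿ be a subspace of dimension d ≥ 1. A point z is an extreme point of V ∩ B₁ⁿ if and only if there exists a nonzero sign vector e ∈ {0,1,-1}ⁿ such that {z} = V ∩ rinte(Δ_e), where Δ_e := {x ∈ S₁^{n-1} : ⟨e, x⟩ = 1} and rinte denotes the relative interior. -/

import Mathlib

/-- The ℓ₁ norm of a vector in ℝⁿ. -/
noncomputable def l1 {n : ℕ} (x : Fin n → ℝ) : ℝ := ∑ i, |x i|

/-- The simplex `Δ_e = {x ∈ S₁^{n-1} : ⟨e, x⟩ = 1}` associated with a sign vector `e`. -/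
def simplexOf {n : ℕ} (e : Fin n → ℝ) : Set (Fin n → ℝ) :=
  {x | l1 x = 1 ∧ ∑ i, e i * x i = 1}

section aux
variable {n : ℕ} {e x : Fin n → ℝ}

lemma l1_nonneg (x : Fin n → ℝ) : 0 ≤ l1 x :=
  Finset.sum_nonneg fun i _ => abs_nonneg _

lemma l1_eq_zero_iff : l1 x = 0 ↔ x = 0 := by
  constructor
  · intro h
    funext i
    have := (Finset.sum_eq_zero_iff_of_nonneg (fun i _ => abs_nonneg (x i))).1 h i (by simp)
    simpa using this
  · rintro rfl; simp [l1]

lemma l1_add_le (x y : Fin n → ℝ) : l1 (x + y) ≤ l1 x + l1 y := by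
  rw [l1, l1, l1, ← Finset.sum_add_distrib]
  exact Finset.sum_le_sum fun i _ => abs_add_le _ _

lemma l1_smul (t : ℝ) (x : Fin n → ℝ) : l1 (t • x) = |t| * l1 x := by
  simp [l1, Finset.mul_sum, abs_mul]

lemma sum_mul_le_l1 (he : ∀ i, |e i| ≤ 1) : ∑ i, e i * x i ≤ l1 x := by
  refine Finset.sum_le_sum fun i _ => ?_
  calc e i * x i ≤ |e i * x i| := le_abs_self _
    _ = |e i| * |x i| := abs_mul _ _
    _ ≤ 1 * |x i| := mul_le_mul_of_nonneg_right (he i) (abs_nonneg _)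
    _ = |x i| := one_mul _

lemma abs_le_one_of_sign (he : ∀ i, e i = 0 ∨ e i = 1 ∨ e i = -1) : ∀ i, |e i| ≤ 1 := by
  intro i; rcases he i with h | h | h <;> simp [h]

lemma mem_simplexOf_iff (he : ∀ i, e i = 0 ∨ e i = 1 ∨ e i = -1) :
    x ∈ simplexOf e ↔ (∀ i, e i * x i = |x i|) ∧ ∑ i, e i * x i = 1 := by
  constructor
  · rintro ⟨h1, h2⟩
    refine ⟨?_, h2⟩
    have hle : ∀ i ∈ Finset.univ, e i * x i ≤ |x i| := by
      intro i _
      calc e i * x i ≤ |e i * x i| := le_abs_self _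
        _ = |e i| * |x i| := abs_mul _ _
        _ ≤ 1 * |x i| := mul_le_mul_of_nonneg_right (abs_le_one_of_sign he i) (abs_nonneg _)
        _ = |x i| := one_mul _
    have hsum : ∑ i, (|x i| - e i * x i) = 0 := by
      rw [Finset.sum_sub_distrib, h2]
      rw [l1] at h1; rw [h1]; ring
    intro i
    have := (Finset.sum_eq_zero_iff_of_nonneg
      (fun i hi => sub_nonneg.2 (hle i hi))).1 hsum i (by simp)
    linarith [this]
  · rintro ⟨h1, h2⟩
    refine ⟨?_, h2⟩
    rw [l1]
    rw [← h2]
    exact Finset.sum_congr rfl fun i _ => (h1 i).symm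

end aux

section span
variable {n : ℕ} {e x : Fin n → ℝ}

/-- The affine subspace `{x | x_i = 0 off supp e, ⟨e,x⟩ = 1}`. -/
noncomputable def signAff (e : Fin n → ℝ) : AffineSubspace ℝ (Fin n → ℝ) where
  carrier := {x | (∀ i, e i = 0 → x i = 0) ∧ ∑ i, e i * x i = 1}
  smul_vsub_vadd_mem' := by
    rintro c p₁ p₂ p₃ ⟨h1, h1'⟩ ⟨h2, h2'⟩ ⟨h3, h3'⟩
    constructor
    · intro i hi
      simp [h1 i hi, h2 i hi, h3 i hi]
    · have : ∀ i, e i * (c • (p₁ -ᵥ p₂) +ᵥ p₃) i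
          = c * (e i * p₁ i) - c * (e i * p₂ i) + e i * p₃ i := by
        intro i; simp [vsub_eq_sub, vadd_eq_add]; ring
      rw [Finset.sum_congr rfl fun i _ => this i]
      simp only [Finset.sum_add_distrib, Finset.sum_sub_distrib, ← Finset.mul_sum,
        h1', h2', h3']
      ring

lemma signAff_mem (hx1 : ∀ i, e i = 0 → x i = 0) (hx2 : ∑ i, e i * x i = 1) :
    x ∈ signAff e := ⟨hx1, hx2⟩

lemma basisVec_mem_simplexOf (he : ∀ i, e i = 0 ∨ e i = 1 ∨ e i = -1)
    {j : Fin n} (hj : e j ≠ 0) : e j • (Pi.single j 1 : Fin n → ℝ) ∈ simplexOf e := by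
  have hsq : e j * e j = 1 := by
    rcases he j with h | h | h
    · exact absurd h hj
    · rw [h]; norm_num
    · rw [h]; norm_num
  constructor
  · rw [l1]
    have : ∀ i, |(e j • (Pi.single j 1 : Fin n → ℝ)) i| = if i = j then |e j| else 0 := by
      intro i
      by_cases h : i = j <;> simp [h, Pi.single_apply, abs_mul]
    rw [Finset.sum_congr rfl fun i _ => this i]
    rw [Finset.sum_ite_eq' Finset.univ j (fun _ => |e j|)]
    have : |e j| = 1 := by
      rcases he j with h | h | h
      · exact absurd h hj
      · simp [h]
      · simp [h]
    simp [this]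
  · have : ∀ i, e i * (e j • (Pi.single j 1 : Fin n → ℝ)) i = if i = j then e j * e j else 0 := by
      intro i
      by_cases h : i = j <;> simp [h, Pi.single_apply] <;> ring
    rw [Finset.sum_congr rfl fun i _ => this i]
    rw [Finset.sum_ite_eq' Finset.univ j (fun _ => e j * e j)]
    simp [hsq]

lemma affineSpan_simplexOf (he : ∀ i, e i = 0 ∨ e i = 1 ∨ e i = -1) :
    (affineSpan ℝ (simplexOf e) : Set (Fin n → ℝ))
      = {x | (∀ i, e i = 0 → x i = 0) ∧ ∑ i, e i * x i = 1} := by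
  apply Set.Subset.antisymm
  · have : affineSpan ℝ (simplexOf e) ≤ signAff e := by
      apply affineSpan_le.2
      intro x hx
      rw [mem_simplexOf_iff he] at hx
      refine ⟨fun i hi => ?_, hx.2⟩
      have := hx.1 i
      rw [hi, zero_mul] at this
      exact abs_eq_zero.1 this.symm
    exact this
  · rintro x ⟨hx1, hx2⟩
    classical
    set ι := {i : Fin n // e i ≠ 0} with hι
    have hsq : ∀ i : ι, e i.1 * e i.1 = 1 := by
      rintro ⟨i, hi⟩
      rcases he i with h | h | h
      · exact absurd h hi
      · rw [h]; norm_num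
      · rw [h]; norm_num
    set p : ι → (Fin n → ℝ) := fun i => e i.1 • (Pi.single i.1 1 : Fin n → ℝ) with hp
    set w : ι → ℝ := fun i => e i.1 * x i.1 with hw
    have hwsum : ∑ i : ι, w i = 1 := by
      have h1 : ∑ i : ι, w i
          = ∑ i ∈ Finset.univ.filter (fun i => e i ≠ 0), e i * x i :=
        (Finset.sum_subtype _ (by simp) (fun i => e i * x i)).symm
      rw [h1, Finset.sum_filter, ← hx2]
      apply Finset.sum_congr rfl
      intro i _
      by_cases h : e i = 0 <;> simp [h]
    have hcomb : (Finset.univ : Finset ι).affineCombination ℝ p w = x := by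
      rw [Finset.affineCombination_eq_linear_combination _ _ _ hwsum]
      funext j
      simp only [Finset.sum_apply, Pi.smul_apply, hp, hw, smul_eq_mul]
      by_cases hj : e j = 0
      · rw [hx1 j hj]
        apply Finset.sum_eq_zero
        rintro ⟨i, hi⟩ _
        have : i ≠ j := fun h => hi (h ▸ hj)
        simp [Pi.single_apply, this]
      · rw [Finset.sum_eq_single (⟨j, hj⟩ : ι)]
        · simp only [Pi.single_eq_same, mul_one]
          linear_combination x j * hsq ⟨j, hj⟩
        · rintro ⟨i, hi⟩ _ hne
          have : i ≠ j := fun h => hne (Subtype.ext h)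
          simp [Pi.single_apply, this]
        · intro h; exact absurd (Finset.mem_univ _) h
    rw [← hcomb]
    have := affineCombination_mem_affineSpan hwsum p
    refine SetLike.le_def.1 (affineSpan_le.2 ?_) this
    rintro y ⟨i, rfl⟩
    exact subset_affineSpan ℝ _ (basisVec_mem_simplexOf he i.2)

end span
section interiorchar
variable {n : ℕ} {e : Fin n → ℝ}

lemma sign_sq (he : ∀ i, e i = 0 ∨ e i = 1 ∨ e i = -1) {j : Fin n} (hj : e j ≠ 0) :
    e j * e j = 1 := by
  rcases he j with h | h | h
  · exact absurd h hj
  · rw [h]; norm_num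
  · rw [h]; norm_num

lemma sign_abs (he : ∀ i, e i = 0 ∨ e i = 1 ∨ e i = -1) {j : Fin n} (hj : e j ≠ 0) :
    |e j| = 1 := by
  rcases he j with h | h | h
  · exact absurd h hj
  · simp [h]
  · simp [h]

lemma mem_simplexOf_of_conds (he : ∀ i, e i = 0 ∨ e i = 1 ∨ e i = -1) {x : Fin n → ℝ}
    (h1 : ∀ i, e i ≠ 0 → 0 < e i * x i) (h2 : ∀ i, e i = 0 → x i = 0)
    (h3 : ∑ i, e i * x i = 1) : x ∈ simplexOf e := by
  rw [mem_simplexOf_iff he]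
  refine ⟨fun i => ?_, h3⟩
  by_cases hi : e i = 0
  · simp [hi, h2 i hi]
  · have hpos := h1 i hi
    have : |x i| = |e i * x i| := by rw [abs_mul, sign_abs he hi, one_mul]
    rw [this, abs_of_pos hpos]

lemma mem_intrinsicInterior_simplexOf (he : ∀ i, e i = 0 ∨ e i = 1 ∨ e i = -1)
    (x : Fin n → ℝ) :
    x ∈ intrinsicInterior ℝ (simplexOf e) ↔
      (∀ i, e i ≠ 0 → 0 < e i * x i) ∧ (∀ i, e i = 0 → x i = 0) ∧
        ∑ i, e i * x i = 1 := by
  constructor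
  · rintro ⟨y, hy, rfl⟩
    have hxS : (y : Fin n → ℝ) ∈ simplexOf e := by
      have h' : y ∈ Subtype.val ⁻¹' simplexOf e := interior_subset hy
      exact h'
    rw [mem_simplexOf_iff he] at hxS
    obtain ⟨habs, hsum⟩ := hxS
    have h2 : ∀ i, e i = 0 → (y : Fin n → ℝ) i = 0 := by
      intro i hi
      have := habs i
      rw [hi, zero_mul] at this
      exact abs_eq_zero.1 this.symm
    refine ⟨?_, h2, hsum⟩
    by_contra hcon
    push_neg at hcon
    obtain ⟨j, hj0, hjle⟩ := hcon
    have hjz : e j * (y : Fin n → ℝ) j = 0 := by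
      have h' := abs_nonneg ((y : Fin n → ℝ) j)
      rw [← habs j] at h'
      linarith
    obtain ⟨k, hk⟩ : ∃ k, 0 < e k * (y : Fin n → ℝ) k := by
      by_contra h
      push_neg at h
      have : ∑ i, e i * (y : Fin n → ℝ) i ≤ 0 := Finset.sum_nonpos fun i _ => h i
      linarith [hsum ▸ this]
    have hk0 : e k ≠ 0 := fun h => by simp [h] at hk
    have hkj : k ≠ j := fun h => by rw [h, hjz] at hk; exact lt_irrefl _ hk
    set v : Fin n → ℝ :=
      e k • (Pi.single k 1 : Fin n → ℝ) - e j • (Pi.single j 1 : Fin n → ℝ) with hv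
    have hvj : v j = -(e j) := by
      simp [hv, Pi.single_apply, hkj]
    have hvsum : ∑ i, e i * v i = 0 := by
      have : ∀ i, e i * v i =
          (if i = k then e k * e k else 0) - (if i = j then e j * e j else 0) := by
        intro i
        by_cases h1 : i = k
        · subst h1
          simp [hv, Pi.single_apply, hkj, mul_sub]
        · by_cases h2 : i = j
          · subst h2
            simp [hv, Pi.single_apply, Ne.symm hkj, mul_sub]
          · simp [hv, Pi.single_apply, h1, h2, mul_sub]
      rw [Finset.sum_congr rfl fun i _ => this i, Finset.sum_sub_distrib,
        Finset.sum_ite_eq' Finset.univ k (fun _ => e k * e k),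
        Finset.sum_ite_eq' Finset.univ j (fun _ => e j * e j)]
      simp [sign_sq he hk0, sign_sq he hj0]
    have hv0 : ∀ i, e i = 0 → v i = 0 := by
      intro i hi
      have hik : i ≠ k := fun h => hk0 (h ▸ hi)
      have hij : i ≠ j := fun h => hj0 (h ▸ hi)
      simp [hv, Pi.single_apply, hik, hij]
    have hspan : ∀ t : ℝ, (y : Fin n → ℝ) + t • v ∈ affineSpan ℝ (simplexOf e) := by
      intro t
      have hmem : (y : Fin n → ℝ) + t • v ∈
          (affineSpan ℝ (simplexOf e) : Set (Fin n → ℝ)) := by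
        rw [affineSpan_simplexOf he]
        constructor
        · intro i hi
          simp [h2 i hi, hv0 i hi]
        · have : ∀ i, e i * ((y : Fin n → ℝ) + t • v) i
              = e i * (y : Fin n → ℝ) i + t * (e i * v i) := by
            intro i; simp; ring
          rw [Finset.sum_congr rfl fun i _ => this i, Finset.sum_add_distrib,
            ← Finset.mul_sum, hvsum, hsum]
          ring
      exact hmem
    set f : ℝ → affineSpan ℝ (simplexOf e) := fun t => ⟨(y : Fin n → ℝ) + t • v, hspan t⟩
      with hf
    have hfc : Continuous f := by
      apply Continuous.subtype_mk
      continuity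
    have hf0 : f 0 = y := Subtype.ext (by simp [hf])
    have hopen : IsOpen (f ⁻¹' interior ((↑) ⁻¹' simplexOf e :
        Set (affineSpan ℝ (simplexOf e)))) := isOpen_interior.preimage hfc
    have h0mem : (0 : ℝ) ∈ f ⁻¹' interior ((↑) ⁻¹' simplexOf e :
        Set (affineSpan ℝ (simplexOf e))) := by
      simp only [Set.mem_preimage, hf0]; exact hy
    obtain ⟨ε, hε, hball⟩ := Metric.isOpen_iff.1 hopen 0 h0mem
    have htmem : (ε / 2 : ℝ) ∈ Metric.ball (0:ℝ) ε := by
      rw [Metric.mem_ball, Real.dist_eq, sub_zero, abs_of_pos (half_pos hε)]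
      linarith
    have hS : (y : Fin n → ℝ) + (ε/2) • v ∈ simplexOf e := by
      have h' : f (ε/2) ∈ Subtype.val ⁻¹' simplexOf e := interior_subset (hball htmem)
      exact h'
    rw [mem_simplexOf_iff he] at hS
    have := hS.1 j
    have hcompute : e j * ((y : Fin n → ℝ) + (ε/2) • v) j = -(ε/2) := by
      simp only [Pi.add_apply, Pi.smul_apply, smul_eq_mul, hvj, mul_add]
      rw [hjz]
      have := sign_sq he hj0
      ring_nf
      nlinarith [sign_sq he hj0]
    rw [hcompute] at this
    have habsnn := abs_nonneg (((y : Fin n → ℝ) + (ε/2) • v) j)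
    linarith [this ▸ habsnn]
  · rintro ⟨h1, h2, h3⟩
    have hxS : x ∈ simplexOf e := mem_simplexOf_of_conds he h1 h2 h3
    have hxspan : x ∈ affineSpan ℝ (simplexOf e) := subset_affineSpan ℝ _ hxS
    set U : Set (Fin n → ℝ) := ⋂ i, {y | e i ≠ 0 → 0 < e i * y i} with hU
    have hUopen : IsOpen U := by
      apply isOpen_iInter_of_finite
      intro i
      by_cases hi : e i = 0
      · have : {y : Fin n → ℝ | e i ≠ 0 → 0 < e i * y i} = Set.univ := by
          ext y; simp [hi]
        rw [this]; exact isOpen_univ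
      · have hc : Continuous fun y : Fin n → ℝ => e i * y i :=
          continuous_const.mul (continuous_apply i)
        have : {y : Fin n → ℝ | e i ≠ 0 → 0 < e i * y i} = {y | 0 < e i * y i} := by
          ext y; simp [hi]
        rw [this]
        exact isOpen_lt continuous_const hc
    have hUsub : (Subtype.val ⁻¹' U : Set (affineSpan ℝ (simplexOf e))) ⊆
        Subtype.val ⁻¹' simplexOf e := by
      rintro ⟨y, hyspan⟩ hyU
      have hyW : (∀ i, e i = 0 → y i = 0) ∧ ∑ i, e i * y i = 1 := by
        have h' : y ∈ (affineSpan ℝ (simplexOf e) : Set (Fin n → ℝ)) := hyspan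
        rwa [affineSpan_simplexOf he] at h'
      have hy1 : ∀ i, e i ≠ 0 → 0 < e i * y i := fun i hi =>
        Set.mem_iInter.1 hyU i hi
      exact mem_simplexOf_of_conds he hy1 hyW.1 hyW.2
    refine ⟨⟨x, hxspan⟩, ?_, rfl⟩
    apply interior_maximal hUsub (hUopen.preimage continuous_subtype_val)
    exact Set.mem_iInter.2 fun i => h1 i

end interiorchar

open Filter in
lemma perturb_exists {n : ℕ} {e z : Fin n → ℝ} (a : Fin n → ℝ)
    (hz1 : ∀ i, e i ≠ 0 → 0 < e i * z i) :
    ∃ t : ℝ, 0 < t ∧ ∀ i, e i ≠ 0 → 0 < e i * (z i + t * (z i - a i)) := by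
  have hev : ∀ i : Fin n, ∀ᶠ t : ℝ in nhds 0,
      e i ≠ 0 → 0 < e i * (z i + t * (z i - a i)) := by
    intro i
    by_cases hi : e i = 0
    · exact Filter.Eventually.of_forall fun t h => absurd hi h
    · have hc : Continuous fun t : ℝ => e i * (z i + t * (z i - a i)) := by
        apply Continuous.mul continuous_const
        apply Continuous.add continuous_const
        exact continuous_id.mul continuous_const
      have hO : IsOpen {t : ℝ | 0 < e i * (z i + t * (z i - a i))} :=
        isOpen_lt continuous_const hc
      have h0m : (0:ℝ) ∈ {t : ℝ | 0 < e i * (z i + t * (z i - a i))} := by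
        simpa using hz1 i hi
      filter_upwards [hO.mem_nhds h0m] with t ht _
      exact ht
  have hall : ∀ᶠ t : ℝ in nhds 0, ∀ i, e i ≠ 0 → 0 < e i * (z i + t * (z i - a i)) :=
    Filter.eventually_all.2 hev
  have hsub : ∀ᶠ t : ℝ in nhdsWithin 0 (Set.Ioi 0),
      ∀ i, e i ≠ 0 → 0 < e i * (z i + t * (z i - a i)) :=
    hall.filter_mono nhdsWithin_le_nhds
  obtain ⟨t, htc, ht⟩ := (hsub.and self_mem_nhdsWithin).exists
  exact ⟨t, ht, htc⟩


/-- Let `V ⊆ ℝⁿ` be a subspace of dimension `d ≥ 1`.  A point `z` is an extreme point of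
`V ∩ B₁ⁿ` iff there is a nonzero sign vector `e ∈ {0,1,-1}ⁿ` with
`{z} = V ∩ rinte(Δ_e)`, where `rinte` is the relative (intrinsic) interior. -/
theorem stmt5 {n : ℕ} (V : Submodule ℝ (Fin n → ℝ)) (hd : 1 ≤ Module.finrank ℝ V)
    (z : Fin n → ℝ) :
    z ∈ Set.extremePoints ℝ ((V : Set (Fin n → ℝ)) ∩ {x | l1 x ≤ 1})
      ↔ ∃ e : Fin n → ℝ, (∀ i, e i = 0 ∨ e i = 1 ∨ e i = -1) ∧ e ≠ 0 ∧
          (V : Set (Fin n → ℝ)) ∩ intrinsicInterior ℝ (simplexOf e) = {z} := by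
  constructor
  · rintro ⟨⟨hzV, hzB⟩, hext⟩
    have hzB' : l1 z ≤ 1 := hzB
    obtain ⟨v, hvV, hv0⟩ : ∃ v ∈ V, v ≠ (0 : Fin n → ℝ) := by
      by_contra h
      push_neg at h
      have hbot : V = ⊥ := (Submodule.eq_bot_iff V).2 h
      rw [hbot, finrank_bot] at hd
      omega
    have hl1v : 0 < l1 v := by
      rcases lt_or_eq_of_le (l1_nonneg v) with h | h
      · exact h
      · exact absurd (l1_eq_zero_iff.1 h.symm) hv0
    have hz1 : l1 z = 1 := by
      by_contra h
      have hlt : l1 z < 1 := lt_of_le_of_ne hzB' h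
      set t := (1 - l1 z) / l1 v with htdef
      have ht : 0 < t := div_pos (by linarith) hl1v
      have htv : t * l1 v = 1 - l1 z := div_mul_cancel₀ _ (ne_of_gt hl1v)
      have hb : ∀ s : ℝ, |s| = t → z + s • v ∈ (V : Set (Fin n → ℝ)) ∩ {x | l1 x ≤ 1} := by
        intro s hs
        refine ⟨V.add_mem hzV (V.smul_mem s hvV), ?_⟩
        have h1 := l1_add_le z (s • v)
        rw [l1_smul, hs, htv] at h1
        simpa using h1
      have h1 := hb t (abs_of_pos ht)
      have h2 := hb (-t) (by rw [abs_neg, abs_of_pos ht])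
      have hseg : z ∈ openSegment ℝ (z + t • v) (z + (-t) • v) := by
        refine ⟨1/2, 1/2, by norm_num, by norm_num, by norm_num, ?_⟩
        funext i
        simp
        ring
      have hcon := hext h1 h2 hseg
      have : t • v = 0 := by
        have := congrArg (fun w => w - z) hcon
        simpa [add_sub_cancel_left] using this
      rcases smul_eq_zero.1 this with h | h
      · exact absurd h (ne_of_gt ht)
      · exact hv0 h
    classical
    set e : Fin n → ℝ := fun i => if 0 < z i then 1 else if z i < 0 then -1 else 0 with he
    have hesign : ∀ i, e i = 0 ∨ e i = 1 ∨ e i = -1 := by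
      intro i
      by_cases h1 : 0 < z i
      · simp [he, h1]
      · by_cases h2 : z i < 0 <;> simp [he, h1, h2]
    have heabs : ∀ i, e i * z i = |z i| := by
      intro i
      rcases lt_trichotomy (z i) 0 with h | h | h
      · simp [he, h, not_lt.2 h.le, abs_of_neg h]
      · simp [he, h]
      · simp [he, h, abs_of_pos h]
    have hez : ∀ i, e i = 0 → z i = 0 := fun i hi => by
      have h' := heabs i
      rw [hi, zero_mul] at h'
      exact abs_eq_zero.1 h'.symm
    have hene : ∀ i, e i ≠ 0 → 0 < e i * z i := by
      intro i hi
      rw [heabs i]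
      rcases eq_or_ne (z i) 0 with h | h
      · exfalso; apply hi; simp [he, h]
      · exact abs_pos.2 h
    have hesum : ∑ i, e i * z i = 1 := by
      rw [Finset.sum_congr rfl fun i _ => heabs i]
      exact hz1
    have hene0 : e ≠ 0 := by
      intro h
      have hz0 : z = 0 := funext fun i => hez i (by rw [h]; rfl)
      rw [hz0] at hz1
      rw [l1_eq_zero_iff.2 rfl] at hz1
      norm_num at hz1
    refine ⟨e, hesign, hene0, ?_⟩
    rw [Set.eq_singleton_iff_unique_mem]
    constructor
    · exact ⟨hzV, (mem_intrinsicInterior_simplexOf hesign z).2 ⟨hene, hez, hesum⟩⟩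
    · rintro w ⟨hwV, hwI⟩
      rw [mem_intrinsicInterior_simplexOf hesign] at hwI
      obtain ⟨hw1, hw2, hw3⟩ := hwI
      obtain ⟨t, ht, htc⟩ := perturb_exists w hene
      set u := z + t • (z - w) with hu
      have hui : ∀ i, u i = z i + t * (z i - w i) := fun i => by simp [hu]
      have hu1 : ∀ i, e i ≠ 0 → 0 < e i * u i := by
        intro i hi; rw [hui i]; exact htc i hi
      have hu2 : ∀ i, e i = 0 → u i = 0 := fun i hi => by
        rw [hui i, hez i hi, hw2 i hi]; ring
      have hu3 : ∑ i, e i * u i = 1 := by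
        have h' : ∀ i, e i * u i = e i * z i + t * (e i * z i) - t * (e i * w i) := by
          intro i; rw [hui i]; ring
        rw [Finset.sum_congr rfl fun i _ => h' i, Finset.sum_sub_distrib,
          Finset.sum_add_distrib, ← Finset.mul_sum, ← Finset.mul_sum, hesum, hw3]
        ring
      have huS : u ∈ simplexOf e := mem_simplexOf_of_conds hesign hu1 hu2 hu3
      have hwS : w ∈ simplexOf e := mem_simplexOf_of_conds hesign hw1 hw2 hw3
      have huK : u ∈ (V : Set (Fin n → ℝ)) ∩ {x | l1 x ≤ 1} :=
        ⟨V.add_mem hzV (V.smul_mem t (V.sub_mem hzV hwV)), le_of_eq huS.1⟩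
      have hwK : w ∈ (V : Set (Fin n → ℝ)) ∩ {x | l1 x ≤ 1} := ⟨hwV, le_of_eq hwS.1⟩
      have h1t : (0:ℝ) < 1 + t := by linarith
      have hseg : z ∈ openSegment ℝ w u := by
        refine ⟨t/(1+t), 1/(1+t), div_pos ht h1t, by positivity, ?_, ?_⟩
        · field_simp
          ring
        · funext i
          simp only [Pi.add_apply, Pi.smul_apply, smul_eq_mul, hui i]
          field_simp
          ring
      exact hext hwK huK hseg
  · rintro ⟨e, hesign, hene0, hset⟩
    have hzmem : z ∈ (V : Set (Fin n → ℝ)) ∩ intrinsicInterior ℝ (simplexOf e) := by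
      rw [hset]; rfl
    obtain ⟨hzV, hzI⟩ := hzmem
    rw [mem_intrinsicInterior_simplexOf hesign] at hzI
    obtain ⟨hz1, hz2, hz3⟩ := hzI
    have hzS : z ∈ simplexOf e := mem_simplexOf_of_conds hesign hz1 hz2 hz3
    have key : ∀ w, w ∈ (V : Set (Fin n → ℝ)) → w ∈ simplexOf e → w = z := by
      intro w hwV hwS
      rw [mem_simplexOf_iff hesign] at hwS
      obtain ⟨hwabs, hwsum⟩ := hwS
      have hw2 : ∀ i, e i = 0 → w i = 0 := fun i hi => by
        have h' := hwabs i
        rw [hi, zero_mul] at h'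
        exact abs_eq_zero.1 h'.symm
      obtain ⟨t, ht, htc⟩ := perturb_exists w hz1
      set u := z + t • (z - w) with hu
      have hui : ∀ i, u i = z i + t * (z i - w i) := fun i => by simp [hu]
      have hu1 : ∀ i, e i ≠ 0 → 0 < e i * u i := by
        intro i hi; rw [hui i]; exact htc i hi
      have hu2 : ∀ i, e i = 0 → u i = 0 := fun i hi => by
        rw [hui i, hz2 i hi, hw2 i hi]; ring
      have hu3 : ∑ i, e i * u i = 1 := by
        have h' : ∀ i, e i * u i = e i * z i + t * (e i * z i) - t * (e i * w i) := by
          intro i; rw [hui i]; ring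
        rw [Finset.sum_congr rfl fun i _ => h' i, Finset.sum_sub_distrib,
          Finset.sum_add_distrib, ← Finset.mul_sum, ← Finset.mul_sum, hz3, hwsum]
        ring
      have huI : u ∈ intrinsicInterior ℝ (simplexOf e) :=
        (mem_intrinsicInterior_simplexOf hesign u).2 ⟨hu1, hu2, hu3⟩
      have huV : u ∈ (V : Set (Fin n → ℝ)) :=
        V.add_mem hzV (V.smul_mem t (V.sub_mem hzV hwV))
      have huz : u = z := by
        have h' : u ∈ ({z} : Set (Fin n → ℝ)) := hset ▸ ⟨huV, huI⟩
        exact h'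
      have hzw : t • (z - w) = 0 := by
        have := congrArg (fun x => x - z) huz
        simpa [hu, add_sub_cancel_left] using this
      rcases smul_eq_zero.1 hzw with h | h
      · exact absurd h (ne_of_gt ht)
      · exact (sub_eq_zero.1 h).symm
    refine ⟨⟨hzV, le_of_eq hzS.1⟩, ?_⟩
    rintro x₁ hx₁ x₂ hx₂ ⟨p, q, hp, hq, hpq, hsum⟩
    have habs1 := abs_le_one_of_sign hesign
    have hb1 : ∑ i, e i * x₁ i ≤ 1 := le_trans (sum_mul_le_l1 habs1) hx₁.2
    have hb2 : ∑ i, e i * x₂ i ≤ 1 := le_trans (sum_mul_le_l1 habs1) hx₂.2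
    have hcomb : p * (∑ i, e i * x₁ i) + q * (∑ i, e i * x₂ i) = 1 := by
      rw [Finset.mul_sum, Finset.mul_sum, ← Finset.sum_add_distrib]
      rw [← hz3, ← hsum]
      apply Finset.sum_congr rfl
      intro i _
      simp
      ring
    have he1 : ∑ i, e i * x₁ i = 1 := by nlinarith
    have he2 : ∑ i, e i * x₂ i = 1 := by nlinarith
    have hx₁S : x₁ ∈ simplexOf e :=
      ⟨le_antisymm hx₁.2 (he1 ▸ sum_mul_le_l1 habs1), he1⟩
    have hx₂S : x₂ ∈ simplexOf e :=
      ⟨le_antisymm hx₂.2 (he2 ▸ sum_mul_le_l1 habs1), he2⟩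
    exact key x₁ hx₁.1 hx₁S
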